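/- Let t, K be positive integers. There exists a degree-t polynomial f : ℝ → ℝ such that f(k) = (−1)^((K−k)/2) for all integers k ∈ [−t, t] with k ≡ K (mod 2), and the sum of absolute values of the coefficients of f is at most C·t³ for a universal constant C. -/

import Mathlib

/-!
Interpolate the signs on the nodes `2j - n`, `0 ≤ j ≤ n`, where `n ∈ {t - 1, t}` has the parity
of `K`. The coefficient `ℓ¹`-norm is submultiplicative, so the Lagrange basis polynomial at node `j`
has norm at most `∏_{i ≠ j} (1 + |2i - n|) / |2j - 2i|`. The denominator is `2ⁿ j! (n - j)!`,
which is smallest at the middle index `j = n / 2`, and comparing each `1 + |2i - n|` with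
`2 (|i - n/2| + 1)` bounds the numerator by `2ⁿ⁺¹ (n + 1)² (n/2)! (n - n/2)!`. Each of the `n + 1`
basis polynomials therefore has norm at most `2 (n + 1)²`.
-/

open Finset Polynomial
open scoped Nat

namespace Polynomial

section SeminormedRing

variable {R : Type*} [SeminormedRing R]

noncomputable def l1Norm (p : R[X]) : ℝ := ∑ i ∈ p.support, ‖p.coeff i‖

theorem l1Norm_nonneg (p : R[X]) : 0 ≤ l1Norm p :=
  sum_nonneg fun _ _ => norm_nonneg _

theorem l1Norm_eq_sum_of_support_subset {p : R[X]} {s : Finset ℕ} (h : p.support ⊆ s) :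
    l1Norm p = ∑ i ∈ s, ‖p.coeff i‖ :=
  sum_subset h fun i _ hi => by rw [notMem_support_iff.1 hi, norm_zero]

theorem l1Norm_add_le (p q : R[X]) : l1Norm (p + q) ≤ l1Norm p + l1Norm q := by
  rw [l1Norm_eq_sum_of_support_subset support_add,
    l1Norm_eq_sum_of_support_subset (p := p) subset_union_left,
    l1Norm_eq_sum_of_support_subset (p := q) subset_union_right, ← sum_add_distrib]
  exact sum_le_sum fun i _ => by simpa only [coeff_add] using norm_add_le _ _

theorem l1Norm_sum_le {ι : Type*} (s : Finset ι) (f : ι → R[X]) :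
    l1Norm (∑ i ∈ s, f i) ≤ ∑ i ∈ s, l1Norm (f i) := by
  classical
  induction s using Finset.induction with
  | empty => simp [l1Norm]
  | insert a s ha ih =>
    rw [sum_insert ha, sum_insert ha]
    exact (l1Norm_add_le _ _).trans (add_le_add_right ih _)

theorem l1Norm_monomial (n : ℕ) (a : R) : l1Norm (monomial n a) = ‖a‖ := by
  rw [l1Norm_eq_sum_of_support_subset (support_monomial_subset n a), sum_singleton,
    coeff_monomial_same]

theorem l1Norm_monomial_mul_le (n : ℕ) (a : R) (q : R[X]) :
    l1Norm (monomial n a * q) ≤ ‖a‖ * l1Norm q := by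
  have hsupp : (monomial n a * q).support ⊆ q.support.map (addRightEmbedding n) := by
    intro k hk
    rw [mem_support_iff, ← C_mul_X_pow_eq_monomial, mul_assoc, X_pow_mul, ← mul_assoc,
      coeff_mul_X_pow'] at hk
    split_ifs at hk with hnk
    · refine mem_map.2 ⟨k - n, mem_support_iff.2 fun hq => hk ?_, Nat.sub_add_cancel hnk⟩
      rw [coeff_C_mul, hq, mul_zero]
    · exact absurd rfl hk
  rw [l1Norm_eq_sum_of_support_subset hsupp, sum_map, l1Norm, mul_sum]
  exact sum_le_sum fun d _ => by
    rw [addRightEmbedding_apply, coeff_monomial_mul]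
    exact norm_mul_le _ _

theorem l1Norm_mul_le (p q : R[X]) : l1Norm (p * q) ≤ l1Norm p * l1Norm q := by
  conv_lhs => rw [p.as_sum_support, sum_mul]
  conv_rhs => rw [l1Norm, sum_mul]
  exact (l1Norm_sum_le _ _).trans (sum_le_sum fun i _ => l1Norm_monomial_mul_le _ _ _)

end SeminormedRing

section NormOneClass

variable {R : Type*} [SeminormedCommRing R] [NormOneClass R]

theorem l1Norm_prod_le {ι : Type*} (s : Finset ι) (f : ι → R[X]) :
    l1Norm (∏ i ∈ s, f i) ≤ ∏ i ∈ s, l1Norm (f i) := by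
  classical
  induction s using Finset.induction with
  | empty => rw [prod_empty, prod_empty, ← monomial_zero_one, l1Norm_monomial, norm_one]
  | insert a s ha ih =>
    rw [prod_insert ha, prod_insert ha]
    exact (l1Norm_mul_le _ _).trans (mul_le_mul_of_nonneg_left ih (l1Norm_nonneg _))

theorem l1Norm_X_sub_C_le (c : R) : l1Norm (X - C c) ≤ 1 + ‖c‖ := by
  have h := l1Norm_add_le (monomial 1 (1 : R)) (monomial 0 (-c))
  rwa [l1Norm_monomial, l1Norm_monomial, norm_one, norm_neg, monomial_one_one_eq_X,
    monomial_zero_left, C_neg, ← sub_eq_add_neg] at h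

end NormOneClass

end Polynomial

namespace Lagrange

variable {𝕜 ι : Type*} [NormedField 𝕜] [DecidableEq ι]

theorem l1Norm_basisDivisor_le (x y : 𝕜) :
    l1Norm (basisDivisor x y) ≤ ‖x - y‖⁻¹ * (1 + ‖y‖) := by
  rw [basisDivisor, ← monomial_zero_left, ← norm_inv]
  exact (l1Norm_monomial_mul_le _ _ _).trans
    (mul_le_mul_of_nonneg_left (l1Norm_X_sub_C_le y) (norm_nonneg _))

theorem l1Norm_basis_le (s : Finset ι) (v : ι → 𝕜) (i : ι) :
    l1Norm (Lagrange.basis s v i) ≤ ∏ j ∈ s.erase i, ‖v i - v j‖⁻¹ * (1 + ‖v j‖) :=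
  (l1Norm_prod_le _ _).trans
    (prod_le_prod (fun _ _ => l1Norm_nonneg _) fun _ _ => l1Norm_basisDivisor_le _ _)

theorem l1Norm_interpolate_le (s : Finset ι) (v r : ι → 𝕜) :
    l1Norm (interpolate s v r) ≤ ∑ i ∈ s, ‖r i‖ * l1Norm (Lagrange.basis s v i) := by
  rw [interpolate_apply]
  refine (l1Norm_sum_le _ _).trans (sum_le_sum fun i _ => ?_)
  rw [← monomial_zero_left]
  exact l1Norm_monomial_mul_le _ _ _

end Lagrange

namespace Nat

theorem cast_dist {α : Type*} [CommRing α] [LinearOrder α] [IsStrictOrderedRing α] (a b : ℕ) :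
    (Nat.dist a b : α) = |(a : α) - b| := by
  rcases le_total a b with h | h
  · rw [dist_eq_sub_of_le h, cast_sub h, abs_of_nonpos (sub_nonpos.2 (by exact_mod_cast h)),
      neg_sub]
  · rw [dist_eq_sub_of_le_right h, cast_sub h, abs_of_nonneg (sub_nonneg.2 (by exact_mod_cast h))]

theorem factorial_half_mul_factorial_le {n j : ℕ} (hj : j ≤ n) :
    (n / 2)! * (n - n / 2)! ≤ j ! * (n - j)! := by
  refine Nat.le_of_mul_le_mul_left ?_ (choose_pos (div_le_self n 2))
  calc n.choose (n / 2) * ((n / 2)! * (n - n / 2)!) = n.choose j * (j ! * (n - j)!) := by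
        rw [← mul_assoc, ← mul_assoc, choose_mul_factorial_mul_factorial hj,
          choose_mul_factorial_mul_factorial (div_le_self n 2)]
    _ ≤ n.choose (n / 2) * (j ! * (n - j)!) := Nat.mul_le_mul_right _ (choose_le_middle j n)

theorem prod_range_succ_comp_dist {M : Type*} [CommMonoid M] (g : ℕ → M) {m n : ℕ}
    (hm : m ≤ n) : ∏ i ∈ range (n + 1), g (Nat.dist i m) =
      (∏ k ∈ range m, g (k + 1)) * ∏ k ∈ range (n + 1 - m), g k := by
  rw [← prod_range_mul_prod_Ico _ (by omega : m ≤ n + 1), prod_Ico_eq_prod_range]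
  congr 1
  · rw [← prod_range_reflect]
    exact prod_congr rfl fun k hk => by
      rw [dist_eq_sub_of_le (by omega)]
      have := mem_range.1 hk
      congr 1
      omega
  · exact prod_congr rfl fun k _ => by rw [dist_eq_sub_of_le_right (by omega)]; congr 1; omega

theorem prod_erase_dist {n j : ℕ} (hj : j ≤ n) :
    ∏ i ∈ (range (n + 1)).erase j, Nat.dist i j = j ! * (n - j)! := by
  have hmax : ∏ i ∈ (range (n + 1)).erase j, Nat.dist i j =
      ∏ i ∈ range (n + 1), max (Nat.dist i j) 1 := by
    rw [← prod_erase (f := fun i => max (Nat.dist i j) 1) (a := j) _ (by simp [dist_self])]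
    exact prod_congr rfl fun i hi => (max_eq_left (dist_pos_of_ne (ne_of_mem_erase hi))).symm
  rw [hmax, prod_range_succ_comp_dist (max · 1) hj, show n + 1 - j = n - j + 1 by omega,
    prod_range_succ', ← prod_range_add_one_eq_factorial, ← prod_range_add_one_eq_factorial]
  simp

theorem prod_range_succ_dist_add_one {m n : ℕ} (hm : m ≤ n) :
    ∏ i ∈ range (n + 1), (Nat.dist i m + 1) = (m + 1)! * (n + 1 - m)! := by
  rw [prod_range_succ_comp_dist (· + 1) hm, ← prod_range_add_one_eq_factorial (m + 1),
    prod_range_succ', prod_range_add_one_eq_factorial]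
  simp

theorem prod_range_succ_dist_half_add_one_le {n j : ℕ} (hj : j ≤ n) :
    ∏ i ∈ range (n + 1), (Nat.dist i (n / 2) + 1) ≤ (n + 1) ^ 2 * (j ! * (n - j)!) := by
  rw [prod_range_succ_dist_add_one (div_le_self n 2), show n + 1 - n / 2 = n - n / 2 + 1 by omega,
    factorial_succ, factorial_succ]
  calc _ = ((n / 2 + 1) * (n - n / 2 + 1)) * ((n / 2)! * (n - n / 2)!) := by ring
    _ ≤ (n + 1) ^ 2 * (j ! * (n - j)!) :=
      Nat.mul_le_mul (by rw [sq]; exact Nat.mul_le_mul (by omega) (by omega))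
        (factorial_half_mul_factorial_le hj)

end Nat

/-- `parityNode n j = 2j - n`: for `j ∈ range (n + 1)` these are the integers in `[-n, n]`
congruent to `n` mod 2. -/
def parityNode (n j : ℕ) : ℝ := 2 * j - n

theorem norm_parityNode_sub (n i j : ℕ) :
    ‖parityNode n j - parityNode n i‖ = 2 * (Nat.dist i j : ℝ) := by
  rw [Nat.cast_dist, Real.norm_eq_abs, parityNode, parityNode,
    show 2 * (j : ℝ) - n - (2 * i - n) = 2 * (j - i) by ring, abs_mul, abs_two, abs_sub_comm]

theorem one_add_norm_parityNode_le (n i : ℕ) :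
    1 + ‖parityNode n i‖ ≤ 2 * ((Nat.dist i (n / 2) + 1 : ℕ) : ℝ) := by
  have h : 1 + Nat.dist (2 * i) n ≤ 2 * (Nat.dist i (n / 2) + 1) := by unfold Nat.dist; omega
  rw [Real.norm_eq_abs, parityNode, show (2 * i : ℝ) = (2 * i : ℕ) by push_cast; rfl,
    ← Nat.cast_dist]
  exact_mod_cast h

theorem prod_erase_norm_parityNode_sub {n j : ℕ} (hj : j ≤ n) :
    ∏ i ∈ (range (n + 1)).erase j, ‖parityNode n j - parityNode n i‖ =
      2 ^ n * ((j ! * (n - j)! : ℕ) : ℝ) := by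
  rw [prod_congr rfl fun i _ => norm_parityNode_sub n i j, prod_mul_distrib, prod_const,
    card_erase_of_mem (mem_range.2 (by omega)), card_range, Nat.add_sub_cancel, ← Nat.cast_prod,
    Nat.prod_erase_dist hj]

theorem prod_erase_one_add_norm_parityNode_le {n j : ℕ} (hj : j ≤ n) :
    ∏ i ∈ (range (n + 1)).erase j, (1 + ‖parityNode n i‖) ≤
      2 ^ (n + 1) * (((n + 1) ^ 2 * (j ! * (n - j)!) : ℕ) : ℝ) := by
  calc _ ≤ (1 + ‖parityNode n j‖) * ∏ i ∈ (range (n + 1)).erase j, (1 + ‖parityNode n i‖) :=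
        le_mul_of_one_le_left (prod_nonneg fun _ _ => by positivity) (by simp)
    _ = ∏ i ∈ range (n + 1), (1 + ‖parityNode n i‖) :=
        mul_prod_erase _ (fun i => 1 + ‖parityNode n i‖) (mem_range.2 (by omega))
    _ ≤ ∏ i ∈ range (n + 1), 2 * ((Nat.dist i (n / 2) + 1 : ℕ) : ℝ) :=
        prod_le_prod (fun _ _ => by positivity) fun i _ => one_add_norm_parityNode_le n i
    _ ≤ _ := by
        rw [prod_mul_distrib, prod_const, card_range, ← Nat.cast_prod]
        gcongr
        exact Nat.prod_range_succ_dist_half_add_one_le hj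

theorem l1Norm_basis_parityNode_le {n j : ℕ} (hj : j ≤ n) :
    l1Norm (Lagrange.basis (range (n + 1)) (parityNode n) j) ≤ 2 * (n + 1) ^ 2 := by
  have hfact : (0 : ℝ) < (j ! * (n - j)! : ℕ) := by positivity
  calc l1Norm (Lagrange.basis (range (n + 1)) (parityNode n) j)
      ≤ ∏ i ∈ (range (n + 1)).erase j,
          ‖parityNode n j - parityNode n i‖⁻¹ * (1 + ‖parityNode n i‖) :=
        Lagrange.l1Norm_basis_le _ _ _
    _ = (∏ i ∈ (range (n + 1)).erase j, ‖parityNode n j - parityNode n i‖)⁻¹ *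
          ∏ i ∈ (range (n + 1)).erase j, (1 + ‖parityNode n i‖) := by
        rw [prod_mul_distrib, prod_inv_distrib]
    _ ≤ (2 ^ n * ((j ! * (n - j)! : ℕ) : ℝ))⁻¹ *
          (2 ^ (n + 1) * (((n + 1) ^ 2 * (j ! * (n - j)!) : ℕ) : ℝ)) := by
        rw [prod_erase_norm_parityNode_sub hj]
        gcongr
        exact prod_erase_one_add_norm_parityNode_le hj
    _ = 2 * (n + 1) ^ 2 := by
        push_cast at hfact ⊢
        field_simp
        ring

theorem l1Norm_interpolate_parityNode_le (n : ℕ) (r : ℕ → ℝ) :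
    l1Norm (Lagrange.interpolate (range (n + 1)) (parityNode n) r) ≤
      2 * (n + 1) ^ 2 * ∑ j ∈ range (n + 1), ‖r j‖ := by
  rw [mul_sum]
  refine (Lagrange.l1Norm_interpolate_le _ _ _).trans (sum_le_sum fun j hj => ?_)
  rw [mul_comm]
  exact mul_le_mul_of_nonneg_right
    (l1Norm_basis_parityNode_le (Nat.lt_succ_iff.1 (mem_range.1 hj))) (norm_nonneg _)

theorem interpolation_alternating_signs :
    ∃ C : ℝ, 0 < C ∧
      ∀ t K : ℕ, 0 < t → 0 < K →
        ∃ f : Polynomial ℝ, f.natDegree ≤ t ∧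
          (∀ k : ℤ, |k| ≤ (t : ℤ) → k % 2 = (K : ℤ) % 2 →
            f.eval (k : ℝ) = (-1 : ℝ) ^ (((K : ℤ) - k) / 2)) ∧
          (∑ i ∈ Finset.range (t + 1), |f.coeff i|) ≤ C * t ^ 3 := by
  refine ⟨16, by norm_num, fun t K ht _ => ?_⟩
  -- the largest `n ≤ t` with `n ≡ K (mod 2)`; the admissible `k` are the nodes `2j - n`
  set n := t - (t + K) % 2
  set r : ℕ → ℝ := fun j => (-1) ^ (((K : ℤ) - (2 * j - n)) / 2)
  set f := Lagrange.interpolate (range (n + 1)) (parityNode n) r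
  have hinj : Set.InjOn (parityNode n) (range (n + 1)) := fun a _ b _ h => by
    simpa [parityNode] using h
  have hdeg : f.natDegree ≤ t :=
    natDegree_le_iff_degree_le.2 ((Lagrange.degree_interpolate_le (r := r) hinj).trans
      (by rw [card_range, Nat.add_sub_cancel]; exact_mod_cast Nat.sub_le _ _))
  refine ⟨f, hdeg, fun k hk hpar => ?_, ?_⟩
  · obtain ⟨j, hj, rfl⟩ : ∃ j : ℕ, j < n + 1 ∧ 2 * (j : ℤ) - n = k := by
      have := abs_le.1 hk
      exact ⟨((k + n) / 2).toNat, by omega, by omega⟩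
    have hnode : ((2 * (j : ℤ) - n : ℤ) : ℝ) = parityNode n j := by push_cast; rfl
    rw [hnode, Lagrange.eval_interpolate_at_node r hinj (mem_range.2 hj)]
  · have hn : (n + 1 : ℝ) ≤ 2 * t := by exact_mod_cast (by omega : n + 1 ≤ 2 * t)
    calc ∑ i ∈ range (t + 1), |f.coeff i|
        = l1Norm f :=
          (l1Norm_eq_sum_of_support_subset (supp_subset_range (Nat.lt_succ_of_le hdeg))).symm
      _ ≤ 2 * (n + 1) ^ 2 * ∑ j ∈ range (n + 1), ‖r j‖ := l1Norm_interpolate_parityNode_le n r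
      _ = 2 * (n + 1) ^ 3 := by
          simp only [r, norm_zpow, norm_neg, norm_one, one_zpow, sum_const, card_range,
            nsmul_eq_mul, Nat.cast_add, Nat.cast_one, mul_one]
          ring
      _ ≤ 2 * (2 * t) ^ 3 := by gcongr
      _ = 16 * t ^ 3 := by ring
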